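/- arXiv:2106.04037 — 7 statements merged into one kernel-verified Lean document; each statement's English description precedes it below -/
import Mathlib

section
/- For N = 2m with m ≥ 3, there exists a graph G on N vertices with exactly N²/4 + N/2 edges such that for every subset S of N/2 vertices, the induced subgraph on the complement V \ S is connected. -/
/-! Take two copies of the complete graph on `Fin m` and join `i` in the first copy to `i` and
`i + 1` in the second. Every vertex has degree `m + 1`, which gives `m (m + 1) = N²/4 + N/2`
edges. A set of `m` surviving vertices induces a connected graph as soon as it contains an edge
between the two copies. If it met the copies in nonempty sets `X` and `Y` with no such edge, then
`X ∪ (X + 1)` would fit into the `m - #Y = #X` positions outside `Y`, so `X` would be closed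
under `+ 1`, hence everything, leaving `Y` empty. -/

open Classical SimpleGraph Finset Sum

namespace Equiv.Perm

variable {α : Type*} [Fintype α] [DecidableEq α] {σ : Perm α} {s : Set α} {x : α}

theorem IsCycle.support_subset_of_mapsTo (hσ : σ.IsCycle) (hs : Set.MapsTo σ s s) (hx : x ∈ s)
    (hσx : σ x ≠ x) : ↑σ.support ⊆ s := by
  intro y hy
  obtain ⟨n, rfl⟩ := hσ.exists_pow_eq hσx (mem_support.mp hy)
  exact hs.perm_pow n hx

end Equiv.Perm

namespace SimpleGraph

section Transport

variable {V W : Type*} {G : SimpleGraph V} {G' : SimpleGraph W}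

theorem Iso.connected_induce_of_preimage (φ : G ≃g G') {s : Set W}
    (h : (G.induce (φ ⁻¹' s)).Connected) : (G'.induce s).Connected :=
  (φ.induce φ.bijective.bijOn_preimage).connected_iff.mp h

end Transport

variable {α : Type*} (σ : Equiv.Perm α)

def cliquePairGraph : SimpleGraph (α ⊕ α) where
  Adj
    | inl i, inl j | inr i, inr j => i ≠ j
    | inl i, inr j | inr j, inl i => j = i ∨ j = σ i
  symm := ⟨by rintro (i | i) (j | j) h <;> first | exact h | exact Ne.symm h⟩
  loopless := ⟨by rintro (i | i) h <;> exact h rfl⟩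

variable {σ}

@[simp] theorem cliquePairGraph_adj_inl_inl {i j : α} :
    (cliquePairGraph σ).Adj (inl i) (inl j) ↔ i ≠ j := Iff.rfl

@[simp] theorem cliquePairGraph_adj_inr_inr {i j : α} :
    (cliquePairGraph σ).Adj (inr i) (inr j) ↔ i ≠ j := Iff.rfl

@[simp] theorem cliquePairGraph_adj_inl_inr {i j : α} :
    (cliquePairGraph σ).Adj (inl i) (inr j) ↔ j = i ∨ j = σ i := Iff.rfl

@[simp] theorem cliquePairGraph_adj_inr_inl {i j : α} :
    (cliquePairGraph σ).Adj (inr j) (inl i) ↔ j = i ∨ j = σ i := Iff.rfl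

theorem connected_induce_cliquePairGraph {T : Set (α ⊕ α)} [Nonempty T]
    (hcross : ∀ i j, inl i ∈ T → inr j ∈ T →
      ∃ i' j', inl i' ∈ T ∧ inr j' ∈ T ∧ (cliquePairGraph σ).Adj (inl i') (inr j')) :
    ((cliquePairGraph σ).induce T).Connected := by
  have hleft : ∀ i i' (hi : inl i ∈ T) (hi' : inl i' ∈ T),
      ((cliquePairGraph σ).induce T).Reachable ⟨_, hi⟩ ⟨_, hi'⟩ := by
    intro i i' hi hi'
    obtain rfl | hne := eq_or_ne i i'
    · rfl
    · exact Adj.reachable (by simpa using hne)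
  have hright : ∀ j j' (hj : inr j ∈ T) (hj' : inr j' ∈ T),
      ((cliquePairGraph σ).induce T).Reachable ⟨_, hj⟩ ⟨_, hj'⟩ := by
    intro j j' hj hj'
    obtain rfl | hne := eq_or_ne j j'
    · rfl
    · exact Adj.reachable (by simpa using hne)
  have hmixed : ∀ i j (hi : inl i ∈ T) (hj : inr j ∈ T),
      ((cliquePairGraph σ).induce T).Reachable ⟨_, hi⟩ ⟨_, hj⟩ := by
    intro i j hi hj
    obtain ⟨i', j', hi', hj', hadj⟩ := hcross i j hi hj
    have hedge : ((cliquePairGraph σ).induce T).Reachable ⟨_, hi'⟩ ⟨_, hj'⟩ := Adj.reachable hadj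
    exact ((hleft i i' hi hi').trans hedge).trans (hright j' j hj' hj)
  refine ⟨fun ⟨u, hu⟩ ⟨v, hv⟩ => ?_⟩
  rcases u with i | j <;> rcases v with i' | j'
  · exact hleft i i' hu hv
  · exact hmixed i j' hu hv
  · exact (hmixed i' j hv hu).symm
  · exact hright j j' hu hv

variable [Fintype α] [DecidableEq α]

theorem cliquePairGraph_degree (hσ : ∀ i, σ i ≠ i) (v : α ⊕ α) :
    (cliquePairGraph σ).degree v = Fintype.card α + 1 := by
  have hpos : 0 < Fintype.card α := Fintype.card_pos_iff.mpr ⟨v.elim id id⟩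
  rw [← card_neighborFinset_eq_degree]
  rcases v with i | j
  · have : (cliquePairGraph σ).neighborFinset (inl i) = (univ.erase i).disjSum {i, σ i} := by
      ext (k | k) <;> simp [eq_comm]
    rw [this, card_disjSum, card_erase_of_mem (mem_univ i), card_pair (hσ i).symm, card_univ]
    omega
  · have : (cliquePairGraph σ).neighborFinset (inr j) =
        ({j, σ.symm j} : Finset α).disjSum (univ.erase j) := by
      ext (k | k) <;> simp [eq_comm, Equiv.eq_symm_apply]
    rw [this, card_disjSum, card_erase_of_mem (mem_univ j), card_univ, card_pair]
    · omega
    · simpa [Equiv.eq_symm_apply, eq_comm] using hσ j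

theorem card_edgeFinset_cliquePairGraph (hσ : ∀ i, σ i ≠ i) :
    #(cliquePairGraph σ).edgeFinset = Fintype.card α * (Fintype.card α + 1) := by
  have := sum_degrees_eq_twice_card_edges (cliquePairGraph σ)
  simp only [cliquePairGraph_degree hσ, sum_const, card_univ, Fintype.card_sum, smul_eq_mul] at this
  linarith

theorem exists_cliquePairGraph_adj_inl_inr (hσ : σ.IsCycle) (hsupp : σ.support = univ)
    {T : Finset (α ⊕ α)} (hT : #T = Fintype.card α) (hl : T.toLeft.Nonempty)
    (hr : T.toRight.Nonempty) :
    ∃ i ∈ T.toLeft, ∃ j ∈ T.toRight, (cliquePairGraph σ).Adj (inl i) (inr j) := by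
  set X := T.toLeft
  set Y := T.toRight
  by_contra! hno
  have hXY : #X + #Y = Fintype.card α := by rw [card_toLeft_add_card_toRight, hT]
  have hsub : X ∪ X.image σ ⊆ Yᶜ := by
    intro k hk
    rw [mem_compl]
    intro hkY
    rcases mem_union.mp hk with hkX | hkX
    · exact hno k hkX k hkY (Or.inl rfl)
    · obtain ⟨i, hiX, rfl⟩ := mem_image.mp hkX
      exact hno i hiX _ hkY (Or.inr rfl)
  have hunion : X ∪ X.image σ = X := by
    refine (eq_of_subset_of_card_le subset_union_left ?_).symm
    have := card_le_card hsub
    rw [card_compl] at this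
    omega
  have hmaps : Set.MapsTo σ X X := fun i hi => by
    rw [← hunion]
    exact mem_union_right _ (mem_image_of_mem σ hi)
  obtain ⟨x, hx⟩ := hl
  have hX : σ.support ⊆ X := coe_subset.mp <|
    hσ.support_subset_of_mapsTo hmaps hx (Equiv.Perm.mem_support.mp (hsupp ▸ mem_univ x))
  rw [hsupp, univ_subset_iff] at hX
  rw [hX, card_univ] at hXY
  exact hr.card_pos.ne' (by omega)

theorem connected_induce_compl_cliquePairGraph (hσ : σ.IsCycle) (hsupp : σ.support = univ)
    {S : Finset (α ⊕ α)} (hS : #S = Fintype.card α) :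
    ((cliquePairGraph σ).induce (↑S)ᶜ).Connected := by
  have hT : #Sᶜ = Fintype.card α := by
    rw [card_compl, Fintype.card_sum, hS]
    omega
  have : Nonempty ((↑S)ᶜ : Set (α ⊕ α)) := by
    obtain ⟨x, -⟩ := hσ
    obtain ⟨v, hv⟩ := card_pos.mp (hT ▸ Fintype.card_pos_iff.mpr ⟨x⟩)
    exact ⟨v, by simpa using hv⟩
  refine connected_induce_cliquePairGraph fun i j hi hj => ?_
  rw [← coe_compl] at hi hj ⊢
  obtain ⟨i', hi', j', hj', hadj⟩ := exists_cliquePairGraph_adj_inl_inr hσ hsupp hT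
    ⟨i, mem_toLeft.mpr hi⟩ ⟨j, mem_toRight.mpr hj⟩
  exact ⟨i', j', mem_toLeft.mp hi', mem_toRight.mp hj', hadj⟩

end SimpleGraph

/-- For `N = 2m` with `m ≥ 3`, there exists a graph on `N` vertices with
exactly `N²/4 + N/2` edges such that removing any `N/2` vertices leaves a connected
induced subgraph. -/
theorem stmt3 (N m : ℕ) (hm : 3 ≤ m) (hNm : N = 2 * m) :
    ∃ G : SimpleGraph (Fin N), G.edgeSet.ncard = N ^ 2 / 4 + N / 2 ∧
      ∀ S : Finset (Fin N), S.card = N / 2 →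
        (G.induce ((S : Set (Fin N))ᶜ)).Connected := by
  subst hNm
  have hσ : (finRotate m).IsCycle := isCycle_finRotate_of_le (by omega)
  have hsupp : (finRotate m).support = univ := support_finRotate_of_le (by omega)
  let e : Fin m ⊕ Fin m ≃ Fin (2 * m) := Fintype.equivOfCardEq (by simp [two_mul])
  let φ := Iso.map e (cliquePairGraph (finRotate m))
  refine ⟨(cliquePairGraph (finRotate m)).map e, ?_, fun S hS => ?_⟩
  · rw [← coe_edgeFinset, Set.ncard_coe_finset, ← φ.card_edgeFinset_eq,
      card_edgeFinset_cliquePairGraph fun i => Equiv.Perm.mem_support.mp (hsupp ▸ mem_univ i),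
      Fintype.card_fin]
    have : (2 * m) ^ 2 = 4 * (m * m) := by ring
    rw [this, mul_add]
    omega
  · refine φ.connected_induce_of_preimage ?_
    have hpre : φ ⁻¹' (↑S)ᶜ = (↑(S.map e.symm.toEmbedding))ᶜ := by
      ext v
      simp [φ]
    rw [hpre]
    exact connected_induce_compl_cliquePairGraph hσ hsupp (by simpa using hS)
end

section
/- Let G be a graph on N vertices (N even, N ≥ 6) consisting of two cliques A and B each of size N/2, together with cross edges such that: every vertex has at least two neighbors in the opposite clique, and for every nonempty set T ⊆ A with |T| < N/2, the set of B-neighbors of T is not contained in any set of |T| vertices of B (and symmetrically for T ⊆ B). Then for every set S of N/2 vertices, G minus S is connected. -/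
/-!
Removing `S` leaves `A \ S` and `B \ S`, each still a clique, so the remainder is connected
as soon as one of the two parts is empty or some edge joins them. If both parts are nonempty,
then `S` meets `A` (since `|S| = |B|` but `S ⊉ B`), so `T = A \ S` is a proper nonempty part
of `A` with `|T| = |S ∩ B|`; the expansion hypothesis then forces `T` to have a neighbour
in `B` outside `S ∩ B`, that is, in `B \ S`.
-/

open Classical SimpleGraph

namespace SimpleGraph

variable {V : Type*} {G : SimpleGraph V}

lemma IsClique.induce_preconnected {s : Set V} (hs : G.IsClique s) :
    (G.induce s).Preconnected := by
  rw [induce_eq_top.mpr hs]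
  exact preconnected_top

lemma IsClique.induce_connected {s : Set V} (hs : G.IsClique s) (hne : s.Nonempty) :
    (G.induce s).Connected :=
  (connected_iff _).mpr ⟨hs.induce_preconnected, hne.to_subtype⟩

lemma induce_union_connected_of_isClique {s t : Set V} (hs : G.IsClique s) (ht : G.IsClique t)
    (hne : (s ∪ t).Nonempty) (hadj : s.Nonempty → t.Nonempty → ∃ v ∈ s, ∃ w ∈ t, G.Adj v w) :
    (G.induce (s ∪ t)).Connected := by
  rcases s.eq_empty_or_nonempty with rfl | hs'
  · rw [Set.empty_union] at hne ⊢
    exact ht.induce_connected hne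
  rcases t.eq_empty_or_nonempty with rfl | ht'
  · rw [Set.union_empty] at hne ⊢
    exact hs.induce_connected hne
  obtain ⟨v, hv, w, hw, hvw⟩ := hadj hs' ht'
  exact connected_induce_union hs.induce_preconnected ht.induce_preconnected hv hw hvw

variable [DecidableEq V]

lemma exists_adj_sdiff_of_expansion {A B S : Finset V} {n : ℕ} (hAB : Disjoint A B)
    (hS : S ⊆ A ∪ B) (hA : A.card = n) (hB : B.card = n) (hSn : S.card = n)
    (hexp : ∀ T ⊆ A, T.Nonempty → T.card < n →
      ∀ U ⊆ B, U.card = T.card → ¬ (B.filter (fun b => ∃ a ∈ T, G.Adj a b)) ⊆ U)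
    (hAS : (A \ S).Nonempty) (hBS : (B \ S).Nonempty) :
    ∃ a ∈ A \ S, ∃ b ∈ B \ S, G.Adj a b := by
  have hsplit : (A ∩ S).card + (B ∩ S).card = n := by
    rw [← Finset.card_union_of_disjoint (hAB.mono Finset.inter_subset_left
      Finset.inter_subset_left), ← Finset.union_inter_distrib_right,
      Finset.inter_eq_right.mpr hS, hSn]
  have hAS_card : (A \ S).card + (A ∩ S).card = n := by
    rw [Finset.card_sdiff_add_card_inter, hA]
  have hSA : (A ∩ S).Nonempty := by
    rw [Finset.nonempty_iff_ne_empty]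
    intro hempty
    rw [hempty, Finset.card_empty] at hsplit
    have hBS_eq : B ∩ S = B := Finset.eq_of_subset_of_card_le Finset.inter_subset_left (by omega)
    obtain ⟨b, hb⟩ := hBS
    rw [Finset.mem_sdiff] at hb
    exact hb.2 (Finset.mem_inter.mp (hBS_eq.symm ▸ hb.1)).2
  have hT : (A \ S).card < n := by
    have := hSA.card_pos
    omega
  have hU : (B ∩ S).card = (A \ S).card := by omega
  obtain ⟨b, hb, hbU⟩ := Finset.not_subset.mp
    (hexp _ Finset.sdiff_subset hAS hT _ Finset.inter_subset_left hU)
  obtain ⟨hbB, a, ha, hab⟩ := Finset.mem_filter.mp hb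
  exact ⟨a, ha, b, Finset.mem_sdiff.mpr ⟨hbB, fun hbS => hbU (Finset.mem_inter.mpr ⟨hbB, hbS⟩)⟩,
    hab⟩

end SimpleGraph

theorem stmt4_general {V : Type*} [Fintype V] [DecidableEq V] (G : SimpleGraph V) (N : ℕ)
    (h6 : 6 ≤ N)
    (A B : Finset V) (hAB : Disjoint A B) (hunion : A ∪ B = Finset.univ)
    (hA : A.card = N / 2) (hB : B.card = N / 2)
    (hcliqueA : ∀ a ∈ A, ∀ a' ∈ A, a ≠ a' → G.Adj a a')
    (hcliqueB : ∀ b ∈ B, ∀ b' ∈ B, b ≠ b' → G.Adj b b')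
    (hexpA : ∀ T ⊆ A, T.Nonempty → T.card < N / 2 →
      ∀ U ⊆ B, U.card = T.card →
        ¬ (B.filter (fun b => ∃ a ∈ T, G.Adj a b)) ⊆ U) :
    ∀ S : Finset V, S.card = N / 2 → (G.induce ((S : Set V)ᶜ)).Connected := by
  intro S hS
  have hcompl : ((S : Set V)ᶜ) = ↑(A \ S) ∪ ↑(B \ S) := by
    rw [← Finset.coe_union, ← Finset.union_sdiff_distrib, hunion, ← Finset.compl_eq_univ_sdiff,
      Finset.coe_compl]
  have hcliqueAS : G.IsClique (↑(A \ S) : Set V) :=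
    fun a ha a' ha' hne => hcliqueA a (Finset.mem_sdiff.mp ha).1 a' (Finset.mem_sdiff.mp ha').1 hne
  have hcliqueBS : G.IsClique (↑(B \ S) : Set V) :=
    fun b hb b' hb' hne => hcliqueB b (Finset.mem_sdiff.mp hb).1 b' (Finset.mem_sdiff.mp hb').1 hne
  have hne : ((S : Set V)ᶜ).Nonempty := by
    obtain ⟨v, -, hv⟩ := Finset.exists_mem_notMem_of_card_lt_card
      (s := S) (t := Finset.univ) (by
        rw [← hunion, Finset.card_union_of_disjoint hAB]
        omega)
    exact ⟨v, hv⟩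
  rw [hcompl] at hne ⊢
  exact induce_union_connected_of_isClique hcliqueAS hcliqueBS hne fun hAS hBS =>
    exists_adj_sdiff_of_expansion hAB (hunion ▸ Finset.subset_univ S) hA hB hS hexpA hAS hBS

/-- Two cliques `A`, `B` of size `N/2` each, partitioning the vertex set,
with cross edges so that every vertex has at least two neighbors in the opposite clique
and no nonempty `T ⊆ A` with `|T| < N/2` has all its `B`-neighbors inside a set of `|T|`
vertices of `B` (and symmetrically).  Then removing any `N/2` vertices leaves the graph
connected. -/
theorem stmt4 {V : Type*} [Fintype V] [DecidableEq V] (G : SimpleGraph V) (N : ℕ)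
    (hN : Even N) (h6 : 6 ≤ N) (hcard : Fintype.card V = N)
    (A B : Finset V) (hAB : Disjoint A B) (hunion : A ∪ B = Finset.univ)
    (hA : A.card = N / 2) (hB : B.card = N / 2)
    (hcliqueA : ∀ a ∈ A, ∀ a' ∈ A, a ≠ a' → G.Adj a a')
    (hcliqueB : ∀ b ∈ B, ∀ b' ∈ B, b ≠ b' → G.Adj b b')
    (hdegA : ∀ a ∈ A, 2 ≤ (B.filter (fun b => G.Adj a b)).card)
    (hdegB : ∀ b ∈ B, 2 ≤ (A.filter (fun a => G.Adj b a)).card)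
    (hexpA : ∀ T ⊆ A, T.Nonempty → T.card < N / 2 →
      ∀ U ⊆ B, U.card = T.card →
        ¬ (B.filter (fun b => ∃ a ∈ T, G.Adj a b)) ⊆ U)
    (hexpB : ∀ T ⊆ B, T.Nonempty → T.card < N / 2 →
      ∀ U ⊆ A, U.card = T.card →
        ¬ (A.filter (fun a => ∃ b ∈ T, G.Adj b a)) ⊆ U) :
    ∀ S : Finset V, S.card = N / 2 → (G.induce ((S : Set V)ᶜ)).Connected :=
  stmt4_general G N h6 A B hAB hunion hA hB hcliqueA hcliqueB hexpA
end

section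
/- Let N ≥ 4 be even and let d = N_f + 1 be even with d < N. The circulant graph C_N(1, ..., d/2) (each vertex adjacent to the d/2 nearest vertices on each side of an N-cycle) is N_f-robust: removing any N_f = d - 1 vertices leaves a connected graph. -/
/-!
Walk forward from `u` towards `v` along `u, u + 1, u + 2, …`: as long as no `s` consecutive
vertices of this arc have been removed, some vertex among the next `s` survives and is one
step away, so greedy hopping reaches `v`. Otherwise walk forward from `v` to `u` along the
complementary arc. If both arcs contain `s` consecutive removed vertices, at least `2 s`
vertices were removed.
-/

open Classical SimpleGraph

def cycDist (N : ℕ) (i j : ZMod N) : ℕ := min (i - j).val (j - i).val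

/-- The circulant graph `C_N(1, …, s)` on `ZMod N`. -/
def circulant (N s : ℕ) : SimpleGraph (ZMod N) where
  Adj i j := i ≠ j ∧ cycDist N i j ≤ s
  symm := by
    constructor
    intro i j ⟨h1, h2⟩
    exact ⟨h1.symm, by rwa [cycDist, min_comm]⟩
  loopless := by constructor; intro i h; exact h.1 rfl

open Finset

section Sequence

variable {V : Type*} (T : Set V) (p : ℕ → V) (s k : ℕ)

def HasRunOutside : Prop :=
  ∃ t, t + s < k ∧ ∀ j ∈ Icc 1 s, p (t + j) ∉ T

variable {T p s k} {G : SimpleGraph V}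

theorem induce_reachable_of_not_hasRunOutside
    (hadj : ∀ i j, 1 ≤ j → j ≤ s → G.Adj (p i) (p (i + j)))
    (hrun : ¬ HasRunOutside T p s k) {x y : T} (hx : x.1 = p 0) (hy : y.1 = p k) :
    (G.induce T).Reachable x y := by
  induction k using Nat.strong_induction_on generalizing p x with
  | _ k ih =>
    rcases Nat.lt_or_ge s k with hsk | hks
    · obtain ⟨j, hj, hjT⟩ : ∃ j ∈ Icc 1 s, p j ∈ T := by
        by_contra! h
        exact hrun ⟨0, by omega, by simpa using h⟩
      obtain ⟨hj1, hjs⟩ := mem_Icc.mp hj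
      have hxj : (G.induce T).Adj x ⟨p j, hjT⟩ := by
        simpa [hx] using hadj 0 j hj1 hjs
      have hrun' : ¬ HasRunOutside T (fun i => p (j + i)) s (k - j) := by
        rintro ⟨t, ht, hout⟩
        exact hrun ⟨j + t, by omega, fun i hi => by simpa [add_assoc] using hout i hi⟩
      refine hxj.reachable.trans (ih (k - j) (by omega) (fun i i' h1 h2 => ?_) hrun' rfl ?_)
      · simpa [add_assoc] using hadj (j + i) i' h1 h2
      · rw [hy, Nat.add_sub_cancel' (by omega)]
    · obtain rfl | hk := Nat.eq_zero_or_pos k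
      · rw [Subtype.ext (hx.trans hy.symm)]
      · exact Adj.reachable (by simpa [induce_adj, hx, hy] using hadj 0 k hk hks)

end Sequence

theorem circulant_adj_add_natCast {N s j : ℕ} (hsN : s < N) (hj1 : 1 ≤ j) (hjs : j ≤ s)
    (x : ZMod N) : (circulant N s).Adj x (x + j) := by
  have hj : (j : ZMod N).val = j := ZMod.val_natCast_of_lt (by omega)
  refine ⟨fun h => ?_, ?_⟩
  · have h0 : (j : ZMod N) = 0 := by simpa using h.symm
    rw [h0, ZMod.val_zero] at hj
    omega
  · exact (min_le_right _ _).trans (by simp [hj, hjs])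

theorem two_mul_le_card_of_hasRunOutside {N s : ℕ} [NeZero N] {S : Finset (ZMod N)}
    {u v : ZMod N} (huv : u ≠ v)
    (hfwd : HasRunOutside (↑S)ᶜ (fun i : ℕ => u + i) s (v - u).val)
    (hbwd : HasRunOutside (↑S)ᶜ (fun i : ℕ => v + i) s (u - v).val) :
    2 * s ≤ S.card := by
  obtain ⟨t₁, ht₁, hout₁⟩ := hfwd
  obtain ⟨t₂, ht₂, hout₂⟩ := hbwd
  set k := (v - u).val
  have hvu : v - u ≠ 0 := sub_ne_zero.mpr huv.symm
  have harcs : k + (u - v).val = N := by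
    have := ZMod.val_lt (v - u)
    rw [← neg_sub, ZMod.neg_val, if_neg hvu]
    omega
  set A := Icc (t₁ + 1) (t₁ + s)
  set B := Icc (k + t₂ + 1) (k + t₂ + s)
  have hAB : Disjoint A B := disjoint_left.mpr fun i hA hB => by
    simp only [A, B, mem_Icc] at hA hB
    omega
  have hinj : Set.InjOn (fun i : ℕ => u + i) ↑(A ∪ B) := by
    intro a ha b hb hab
    simp only [A, B, coe_union, Set.mem_union, mem_coe, mem_Icc] at ha hb
    have := congrArg ZMod.val (add_left_cancel hab)
    rwa [ZMod.val_natCast_of_lt (by omega), ZMod.val_natCast_of_lt (by omega)] at this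
  have hsub : (A ∪ B).image (fun i : ℕ => u + i) ⊆ S := by
    intro x hx
    obtain ⟨i, hi, rfl⟩ := mem_image.mp hx
    rcases mem_union.mp hi with hi | hi <;> obtain ⟨hi₁, hi₂⟩ := mem_Icc.mp hi
    · simpa [Nat.add_sub_cancel' (by omega : t₁ ≤ i)] using hout₁ (i - t₁) (by simp; omega)
    · have := hout₂ (i - (k + t₂)) (by simp; omega)
      have hv : v = u + k := by simp [k]
      simp only [Set.mem_compl_iff, mem_coe, not_not] at this
      convert this using 1
      rw [hv, add_assoc, ← Nat.cast_add]
      congr 2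
      omega
  calc 2 * s = (A ∪ B).card := by simp [card_union_of_disjoint hAB, A, B]; omega
    _ = ((A ∪ B).image (fun i : ℕ => u + i)).card := (card_image_of_injOn hinj).symm
    _ ≤ S.card := card_le_card hsub

theorem circulant_induce_compl_preconnected {N s : ℕ} (hsN : s < N) {S : Finset (ZMod N)}
    (hS : S.card < 2 * s) : ((circulant N s).induce (↑S)ᶜ).Preconnected := by
  have : NeZero N := ⟨by omega⟩
  have hadj (u : ZMod N) :
      ∀ i j : ℕ, 1 ≤ j → j ≤ s → (circulant N s).Adj (u + i) (u + ((i + j : ℕ) : ZMod N)) := by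
    intro i j hj1 hjs
    simpa [add_assoc] using circulant_adj_add_natCast hsN hj1 hjs (u + i)
  have hreach (x y : ((S : Set (ZMod N))ᶜ : Set (ZMod N)))
      (hrun : ¬ HasRunOutside (↑S)ᶜ (fun i : ℕ => x.1 + i) s (y.1 - x.1).val) :
      ((circulant N s).induce (↑S)ᶜ).Reachable x y :=
    induce_reachable_of_not_hasRunOutside (hadj x) hrun (by simp) (by simp)
  intro x y
  by_cases hxy : x = y
  · exact hxy ▸ .refl _
  by_cases hfwd : HasRunOutside (↑S)ᶜ (fun i : ℕ => x.1 + i) s (y.1 - x.1).val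
  · refine (hreach y x fun hbwd => ?_).symm
    have := two_mul_le_card_of_hasRunOutside (fun h => hxy (Subtype.ext h)) hfwd hbwd
    omega
  · exact hreach x y hfwd

theorem stmt6_general (N d N_f : ℕ) (hdNf : d = N_f + 1)
    (hd : Even d) (hdN : d < N) :
    ∀ S : Finset (ZMod N), S.card ≤ N_f →
      ((circulant N (d / 2)).induce ((S : Set (ZMod N))ᶜ)).Connected := by
  intro S hS
  obtain ⟨s, rfl⟩ := hd
  have : NeZero N := ⟨by omega⟩
  have hcard : S.card < (Finset.univ : Finset (ZMod N)).card := by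
    rw [card_univ, ZMod.card]; omega
  obtain ⟨x, -, hx⟩ := exists_mem_notMem_of_card_lt_card hcard
  rw [connected_iff]
  exact ⟨circulant_induce_compl_preconnected (by omega) (by omega), ⟨⟨x, hx⟩⟩⟩

/-- For even `N ≥ 4` and even `d = N_f + 1 < N` with `d/2 < N/2`, the
circulant graph `C_N(1, …, d/2)` is `N_f`-robust: removing any set of at most
`N_f = d - 1` vertices leaves a connected graph. -/
theorem stmt6 (N d N_f : ℕ) (hN : Even N) (h4 : 4 ≤ N) (hdNf : d = N_f + 1)
    (hd : Even d) (hdN : d < N) (hs : d / 2 < N / 2) :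
    ∀ S : Finset (ZMod N), S.card ≤ N_f →
      ((circulant N (d / 2)).induce ((S : Set (ZMod N))ᶜ)).Connected :=
  stmt6_general N d N_f hdNf hd hdN
end

section
/- Let N be even with N ≥ 4 and let N_f + 1 be even, N_f + 1 < N. Any N_f-robust graph on N vertices has at least N(N_f+1)/2 edges, and the circulant graph C_N(1, ..., (N_f+1)/2) achieves exactly N(N_f+1)/2 edges while being N_f-robust. Hence the minimum number of edges of an N_f-robust graph on N vertices equals N(N_f+1)/2. -/
/-!
Deleting the neighbourhood of a vertex isolates it, so in a `k`-robust graph on more than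
`k + 1` vertices every degree is at least `k + 1`, and summing degrees gives the lower bound.
The circulant `C_N(1, …, s)` is `2s`-regular. After deleting fewer than `2s` vertices, a walk
from `a` to `b` along either arc, with steps of length at most `s`, can only be stopped by `s`
consecutive deleted vertices; such blocks on both arcs would need `2s` deleted vertices.
-/

open Classical SimpleGraph

/-- `G` is `k`-robust: deleting any set of at most `k` vertices leaves a connected
induced subgraph. -/
def Robust {V : Type*} (G : SimpleGraph V) (k : ℕ) : Prop :=
  ∀ S : Finset V, S.card ≤ k → (G.induce ((S : Set V)ᶜ)).Connected

open Finset

namespace Robust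

variable {V : Type*} [Fintype V] {G : SimpleGraph V} {k : ℕ}

theorem le_degree [DecidableRel G.Adj] (hG : Robust G k) (hk : k + 1 < Fintype.card V)
    (v : V) : k + 1 ≤ G.degree v := by
  by_contra! hdeg
  set S := G.neighborFinset v
  have hSk : #S ≤ k := by rw [card_neighborFinset_eq_degree]; omega
  obtain ⟨w, hw⟩ : ∃ w, w ∉ insert v S := by
    by_contra! h
    have := card_insert_le v S
    rw [eq_univ_of_forall h, card_univ] at this
    omega
  rw [mem_insert, not_or] at hw
  have hvS : v ∉ S := G.notMem_neighborFinset_self v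
  have hreach := (hG S hSk).preconnected ⟨v, hvS⟩ ⟨w, hw.2⟩
  obtain ⟨x, hvx⟩ := hreach.nonempty_neighborSet_left (Subtype.coe_ne_coe.mp (Ne.symm hw.1))
  exact x.2 ((G.mem_neighborFinset v x).mpr hvx)

theorem card_mul_le_two_mul_ncard_edgeSet (hG : Robust G k) (hk : k + 1 < Fintype.card V) :
    Fintype.card V * (k + 1) ≤ 2 * G.edgeSet.ncard := by
  rw [← coe_edgeFinset, Set.ncard_coe_finset, ← sum_degrees_eq_twice_card_edges,
    ← smul_eq_mul, ← card_univ, ← sum_const]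
  exact sum_le_sum fun v _ => hG.le_degree hk v

end Robust

theorem ZMod.natCast_injOn_Iio (N : ℕ) : Set.InjOn ((↑) : ℕ → ZMod N) (Set.Iio N) :=
  fun a ha b hb hab => by
    simpa [ZMod.val_natCast_of_lt ha, ZMod.val_natCast_of_lt hb] using congrArg ZMod.val hab

theorem SimpleGraph.IsRegularOfDegree.two_mul_ncard_edgeSet {V : Type*} [Fintype V]
    {G : SimpleGraph V} [DecidableRel G.Adj] {d : ℕ} (h : G.IsRegularOfDegree d) :
    2 * G.edgeSet.ncard = Fintype.card V * d := by
  rw [← coe_edgeFinset, Set.ncard_coe_finset, ← sum_degrees_eq_twice_card_edges,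
    sum_congr rfl fun v _ => h.degree_eq v, sum_const, card_univ, smul_eq_mul]

section circulant

variable {N s : ℕ}

theorem circulant_adj_add_natCast_s8 {a b : ℕ} (hab : a < b) (hbs : b ≤ a + s) (hb : b < N)
    (u : ZMod N) : (circulant N s).Adj (u + a) (u + b) := by
  have hval : ((u + b) - (u + a) : ZMod N).val = b - a := by
    rw [add_sub_add_left_eq_sub, ← Nat.cast_sub hab.le, ZMod.val_natCast_of_lt (by omega)]
  refine ⟨fun h => hab.ne ((ZMod.natCast_injOn_Iio N) (hab.trans hb) hb (add_left_cancel h)), ?_⟩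
  exact min_le_of_right_le (by omega)

variable [NeZero N]

theorem circulant_adj_iff (hs : s < N) {i j : ZMod N} :
    (circulant N s).Adj i j ↔ (j - i).val ∈ Icc 1 s ∪ Icc (N - s) (N - 1) := by
  have hlt : (j - i).val < N := ZMod.val_lt _
  show i ≠ j ∧ min (i - j).val (j - i).val ≤ s ↔ _
  rw [mem_union, mem_Icc, mem_Icc, ne_comm, ← sub_ne_zero, Ne,
    ← ZMod.val_eq_zero (j - i)]
  by_cases h0 : (j - i).val = 0
  · simp only [h0, not_true_eq_false, false_and, false_iff]
    omega
  · have hneg : (i - j).val = N - (j - i).val := by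
      rw [← neg_sub, ZMod.neg_val, if_neg (mt (ZMod.val_eq_zero _).mpr h0)]
    simp only [hneg, min_le_iff]
    omega

theorem circulant_neighborFinset (hs : s < N) (i : ZMod N) :
    (circulant N s).neighborFinset i =
      (Icc 1 s ∪ Icc (N - s) (N - 1)).image fun k : ℕ => i + k := by
  ext j
  rw [mem_neighborFinset, circulant_adj_iff hs, mem_image]
  constructor
  · exact fun h => ⟨_, h, by rw [ZMod.natCast_zmod_val, add_sub_cancel]⟩
  · rintro ⟨k, hk, rfl⟩
    have hkN : k < N := by rw [mem_union, mem_Icc, mem_Icc] at hk; omega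
    rwa [add_sub_cancel_left, ZMod.val_natCast_of_lt hkN]

theorem circulant_isRegularOfDegree (h : 2 * s < N) :
    (circulant N s).IsRegularOfDegree (2 * s) := fun i => by
  have hsub : ((Icc 1 s ∪ Icc (N - s) (N - 1) : Finset ℕ) : Set ℕ) ⊆ Set.Iio N := by
    intro k hk
    simp only [coe_union, coe_Icc, Set.mem_union, Set.mem_Icc] at hk
    simp only [Set.mem_Iio]; omega
  have hdisj : Disjoint (Icc 1 s) (Icc (N - s) (N - 1)) := by
    rw [Finset.disjoint_left]
    intro k hk hk'
    rw [mem_Icc] at hk hk'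
    omega
  rw [← card_neighborFinset_eq_degree, circulant_neighborFinset (by omega),
    card_image_of_injOn fun a ha b hb hab =>
      (ZMod.natCast_injOn_Iio N) (hsub ha) (hsub hb) (add_left_cancel hab),
    card_union_of_disjoint hdisj, Nat.card_Icc, Nat.card_Icc]
  omega

theorem circulant_ncard_edgeSet (h : 2 * s < N) : (circulant N s).edgeSet.ncard = N * s := by
  have := (circulant_isRegularOfDegree h).two_mul_ncard_edgeSet
  rw [ZMod.card] at this
  linarith

theorem circulant_induce_reachable_or_gap {S : Finset (ZMod N)} {u v : ZMod N} (hu : u ∉ S)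
    (hv : v ∉ S) :
    ((circulant N s).induce (S : Set (ZMod N))ᶜ).Reachable ⟨u, hu⟩ ⟨v, hv⟩ ∨
      ∃ j, 0 < j ∧ j + s ≤ (v - u).val ∧ ∀ i ∈ Ico j (j + s), u + (i : ZMod N) ∈ S := by
  set d := (v - u).val
  have hd : d < N := ZMod.val_lt _
  have hud : u + (d : ZMod N) = v := by rw [ZMod.natCast_zmod_val, add_sub_cancel]
  let P : ℕ → Prop := fun t => ∃ h : u + (t : ZMod N) ∉ S,
    ((circulant N s).induce (S : Set (ZMod N))ᶜ).Reachable ⟨u, hu⟩ ⟨_, h⟩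
  have hP0 : P 0 := ⟨by simpa using hu, by simp only [Nat.cast_zero, add_zero]; rfl⟩
  -- `t` is the farthest point along the arc from `u` to `v` that is reachable from `u`.
  set t := Nat.findGreatest P d
  obtain ⟨htS, hreach⟩ : P t := Nat.findGreatest_spec (Nat.zero_le d) hP0
  have htd : t ≤ d := Nat.findGreatest_le d
  have hstep : ∀ i, t < i → i ≤ t + s → i ≤ d → u + (i : ZMod N) ∉ S → P i :=
    fun i hti his hid hiS => ⟨hiS, hreach.trans
      (Adj.reachable (circulant_adj_add_natCast_s8 hti his (by omega) u))⟩
  by_cases hgap : d ≤ t + s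
  · left
    have hPd : P d := by
      rcases htd.lt_or_eq with htd | htd
      · exact hstep d htd hgap le_rfl (hud ▸ hv)
      · exact htd ▸ ⟨htS, hreach⟩
    obtain ⟨hdS, hr⟩ := hPd
    exact (Subtype.ext hud : (⟨_, hdS⟩ : ↥(S : Set (ZMod N))ᶜ) = ⟨v, hv⟩) ▸ hr
  · right
    refine ⟨t + 1, by omega, by omega, fun i hi => ?_⟩
    rw [mem_Ico] at hi
    by_contra hiS
    exact Nat.findGreatest_is_greatest (n := d) (by omega) (by omega)
      (hstep i (by omega) (by omega) (by omega) hiS)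

theorem circulant_induce_compl_connected (h : 2 * s < N) {S : Finset (ZMod N)}
    (hS : #S < 2 * s) : ((circulant N s).induce (S : Set (ZMod N))ᶜ).Connected := by
  obtain ⟨x, hx⟩ : Sᶜ.Nonempty := by rw [← card_pos, card_compl, ZMod.card]; omega
  refine (connected_iff _).mpr ⟨fun ⟨a, ha⟩ ⟨b, hb⟩ => ?_, ⟨⟨x, mem_compl.mp hx⟩⟩⟩
  by_cases hab : a = b
  · subst hab; rfl
  rcases circulant_induce_reachable_or_gap ha hb with hr | ⟨j, hj, hjd, hjS⟩
  · exact hr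
  rcases circulant_induce_reachable_or_gap hb ha with hr | ⟨j', hj', hjd', hjS'⟩
  · exact hr.symm
  exfalso
  set d := (b - a).val
  have hd : (a - b).val = N - d := by
    rw [← neg_sub, ZMod.neg_val, if_neg (sub_ne_zero.mpr (Ne.symm hab))]
  have hbd : b = a + d := by rw [ZMod.natCast_zmod_val, add_sub_cancel]
  have hT : ∀ i ∈ Ico j (j + s) ∪ Ico (d + j') (d + j' + s), i < N := by
    intro i hi
    rw [mem_union, mem_Ico, mem_Ico] at hi
    omega
  have hcard := card_le_card_of_injOn (fun i : ℕ => a + i) (t := S)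
    (fun i hi => by
      rcases mem_union.mp hi with hi | hi
      · exact hjS i hi
      · rw [mem_Ico] at hi
        have := hjS' (i - d) (mem_Ico.mpr (by omega))
        rwa [hbd, add_assoc, ← Nat.cast_add, Nat.add_sub_cancel' (by omega)] at this)
    (fun i hi i' hi' hii' =>
      (ZMod.natCast_injOn_Iio N) (hT i hi) (hT i' hi') (add_left_cancel hii'))
  rw [card_union_of_disjoint (Finset.disjoint_left.mpr fun i hi hi' => by
    rw [mem_Ico] at hi hi'; omega), Nat.card_Ico, Nat.card_Ico] at hcard
  omega

end circulant

theorem stmt8_general (N N_f : ℕ) (hd : Even (N_f + 1))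
    (hdN : N_f + 1 < N) :
    (∀ G : SimpleGraph (ZMod N), Robust G N_f → N * (N_f + 1) / 2 ≤ G.edgeSet.ncard) ∧
    (Robust (circulant N ((N_f + 1) / 2)) N_f ∧
      (circulant N ((N_f + 1) / 2)).edgeSet.ncard = N * (N_f + 1) / 2) ∧
    IsLeast {L : ℕ | ∃ G : SimpleGraph (ZMod N), Robust G N_f ∧ G.edgeSet.ncard = L}
      (N * (N_f + 1) / 2) := by
  have : NeZero N := ⟨by omega⟩
  set s := (N_f + 1) / 2
  have h2s : 2 * s = N_f + 1 := Nat.two_mul_div_two_of_even hd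
  have hcount : (circulant N s).edgeSet.ncard = N * (N_f + 1) / 2 := by
    rw [circulant_ncard_edgeSet (by omega), ← h2s, mul_left_comm,
      Nat.mul_div_cancel_left _ two_pos]
  have lower (G : SimpleGraph (ZMod N)) (hG : Robust G N_f) :
      N * (N_f + 1) / 2 ≤ G.edgeSet.ncard := by
    have := hG.card_mul_le_two_mul_ncard_edgeSet (by rwa [ZMod.card])
    rw [ZMod.card] at this
    omega
  have hrob : Robust (circulant N s) N_f := fun S hS =>
    circulant_induce_compl_connected (by omega) (by omega)
  exact ⟨lower, ⟨hrob, hcount⟩, ⟨circulant N s, hrob, hcount⟩,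
    fun L ⟨G, hG, hL⟩ => hL ▸ lower G hG⟩

/-- For even `N ≥ 4` and even `N_f + 1 < N` (with `(N_f+1)/2 < N/2`),
every `N_f`-robust graph on `N` vertices has at least `N(N_f+1)/2` edges, the circulant
graph `C_N(1, …, (N_f+1)/2)` is `N_f`-robust with exactly `N(N_f+1)/2` edges, and hence
the minimum number of edges of an `N_f`-robust graph on `N` vertices is `N(N_f+1)/2`. -/
theorem stmt8 (N N_f : ℕ) (hN : Even N) (h4 : 4 ≤ N) (hd : Even (N_f + 1))
    (hdN : N_f + 1 < N) (hs : (N_f + 1) / 2 < N / 2) :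
    (∀ G : SimpleGraph (ZMod N), Robust G N_f → N * (N_f + 1) / 2 ≤ G.edgeSet.ncard) ∧
    (Robust (circulant N ((N_f + 1) / 2)) N_f ∧
      (circulant N ((N_f + 1) / 2)).edgeSet.ncard = N * (N_f + 1) / 2) ∧
    IsLeast {L : ℕ | ∃ G : SimpleGraph (ZMod N), Robust G N_f ∧ G.edgeSet.ncard = L}
      (N * (N_f + 1) / 2) :=
  stmt8_general N N_f hd hdN
end

section
/- Suppose N is divisible by 2m for some integer m ≥ 2. Consider the graph G on N vertices constructed by: partitioning the vertices into 2m cliques of size N/(2m) each, and adding N/(2m) vertex-disjoint cycles, each cycle passing through exactly one vertex of each clique, such that the cycles are pairwise vertex-disjoint and each vertex lies on exactly one cycle. Then removing any N/(2m) vertices from G leaves a connected graph. -/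
open Classical SimpleGraph

/-- The clique–cycle graph on `ZMod (2m) × ZMod q`: the fibers `{a} × ZMod q` are
cliques and the fibers `ZMod (2m) × {b}` are cycles on the first coordinate. -/
def cliqueCycle (m q : ℕ) : SimpleGraph (ZMod (2 * m) × ZMod q) where
  Adj p p' := p ≠ p' ∧
    ((p.1 = p'.1 ∧ p.2 ≠ p'.2) ∨ (p.2 = p'.2 ∧ (p'.1 = p.1 + 1 ∨ p.1 = p'.1 + 1)))
  symm := by
    constructor
    rintro ⟨a, b⟩ ⟨c, d⟩ ⟨hne, (⟨h1, h2⟩ | ⟨h1, h2⟩)⟩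
    · exact ⟨hne.symm, Or.inl ⟨h1.symm, h2.symm⟩⟩
    · exact ⟨hne.symm, Or.inr ⟨h1.symm, h2.symm⟩⟩
  loopless := by constructor; rintro ⟨a, b⟩ ⟨h, _⟩; exact h rfl

/-!
The graph is the box product `C₂ₘ □ K_q` of the cycle on `ZMod (2 * m)` with a complete graph:
`q` copies ("rows") of the cycle, joined column by column into cliques. If some row avoids `S`,
every surviving vertex reaches that intact cycle through its column clique. Otherwise, as
`|S| ≤ q`, every row loses exactly one vertex and what remains of it is a path; two such rows are
joined along a column that avoids both deleted vertices, and such a column exists because the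
cycle has at least three vertices.
-/

theorem Finset.exists_forall_mem_iff_fst_eq_of_card_le {α β : Type*} [Fintype β]
    {S : Finset (α × β)} (hS : S.card ≤ Fintype.card β) (hrows : ∀ b, ∃ a, (a, b) ∈ S) :
    ∃ f : β → α, ∀ p, p ∈ S ↔ p.1 = f p.2 := by
  choose f hf using hrows
  have himage : S.image Prod.snd = Finset.univ :=
    Finset.eq_univ_of_forall fun b => Finset.mem_image_of_mem Prod.snd (hf b)
  have hinj : Set.InjOn Prod.snd (S : Set (α × β)) := by
    refine Finset.card_image_iff.mp (le_antisymm Finset.card_image_le ?_)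
    rwa [himage, Finset.card_univ]
  refine ⟨f, fun p => ⟨fun hp => ?_, fun h => ?_⟩⟩
  · exact congrArg Prod.fst (hinj hp (hf p.2) rfl)
  · rw [show p = (f p.2, p.2) from Prod.ext h rfl]
    exact hf p.2

namespace SimpleGraph

variable {α β : Type*} {H : SimpleGraph α} {T : Set (α × β)}

theorem reachable_boxProd_top_induce_of_fst_eq {p p' : α × β} (hp : p ∈ T) (hp' : p' ∈ T)
    (h : p.1 = p'.1) : ((H □ ⊤).induce T).Reachable ⟨p, hp⟩ ⟨p', hp'⟩ := by
  by_cases hpp' : p = p'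
  · subst hpp'; rfl
  · exact Adj.reachable (boxProd_adj.mpr (Or.inr ⟨fun h2 => hpp' (Prod.ext h h2), h⟩))

theorem reachable_boxProd_top_induce_of_row {A : Set α} (hA : (H.induce A).Preconnected) (b : β)
    (hAT : ∀ a ∈ A, (a, b) ∈ T) {a a' : α} (ha : a ∈ A) (ha' : a' ∈ A) :
    ((H □ ⊤).induce T).Reachable ⟨(a, b), hAT a ha⟩ ⟨(a', b), hAT a' ha'⟩ :=
  let row : H.induce A →g (H □ ⊤).induce T :=
    { toFun := fun x => ⟨(x, b), hAT x x.2⟩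
      map_rel' := fun hxy => boxProd_adj_left.mpr hxy }
  (hA ⟨a, ha⟩ ⟨a', ha'⟩).map row

theorem connected_boxProd_top_induce_of_row_subset (hH : H.Connected) (b₀ : β)
    (hb₀ : ∀ a, (a, b₀) ∈ T) : ((H □ ⊤).induce T).Connected := by
  have hrow : (H.induce Set.univ).Preconnected :=
    (induceUnivIso H).preconnected_iff.mpr hH.preconnected
  obtain ⟨a₀⟩ := hH.nonempty
  refine (connected_iff _).mpr ⟨fun ⟨p, hp⟩ ⟨p', hp'⟩ => ?_, ⟨⟨(a₀, b₀), hb₀ a₀⟩⟩⟩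
  exact (reachable_boxProd_top_induce_of_fst_eq hp (hb₀ p.1) rfl).trans <|
    (reachable_boxProd_top_induce_of_row hrow b₀ (fun a _ => hb₀ a) trivial trivial).trans <|
    reachable_boxProd_top_induce_of_fst_eq (hb₀ p'.1) hp' rfl

theorem connected_boxProd_top_induce_fst_ne [Nonempty β]
    (hdel : ∀ v, (H.induce {v}ᶜ).Preconnected) (hα : ∀ a₁ a₂ : α, ∃ a, a ≠ a₁ ∧ a ≠ a₂)
    (f : β → α) : ((H □ ⊤).induce {p : α × β | p.1 ≠ f p.2}).Connected := by
  obtain ⟨b₀⟩ := ‹Nonempty β›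
  obtain ⟨a₀, ha₀, -⟩ := hα (f b₀) (f b₀)
  refine (connected_iff _).mpr ⟨fun ⟨p, hp⟩ ⟨p', hp'⟩ => ?_, ⟨⟨(a₀, b₀), ha₀⟩⟩⟩
  obtain ⟨c, hc, hc'⟩ := hα (f p.2) (f p'.2)
  have hrow : ∀ b, ∀ a ∈ ({f b}ᶜ : Set α), (a, b) ∈ {p : α × β | p.1 ≠ f p.2} := fun _ _ h => h
  exact (reachable_boxProd_top_induce_of_row (hdel _) p.2 (hrow p.2) hp hc).trans <|
    (reachable_boxProd_top_induce_of_fst_eq (p := (c, p.2)) (p' := (c, p'.2)) hc hc' rfl).trans <|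
    reachable_boxProd_top_induce_of_row (hdel _) p'.2 (hrow p'.2) hc' hp'

theorem connected_boxProd_top_induce_compl [Fintype β] [Nonempty β] (hH : H.Connected)
    (hdel : ∀ v, (H.induce {v}ᶜ).Preconnected) (hα : ∀ a₁ a₂ : α, ∃ a, a ≠ a₁ ∧ a ≠ a₂)
    {S : Finset (α × β)} (hS : S.card ≤ Fintype.card β) : ((H □ ⊤).induce (S : Set (α × β))ᶜ).Connected := by
  by_cases hrows : ∀ b, ∃ a, (a, b) ∈ S
  · obtain ⟨f, hf⟩ := Finset.exists_forall_mem_iff_fst_eq_of_card_le hS hrows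
    have hT : (S : Set (α × β))ᶜ = {p | p.1 ≠ f p.2} := by
      ext p
      simp [hf]
    rw [hT]
    exact connected_boxProd_top_induce_fst_ne hdel hα f
  · push Not at hrows
    obtain ⟨b₀, hb₀⟩ := hrows
    exact connected_boxProd_top_induce_of_row_subset hH b₀ hb₀

def zmodCycle (n : ℕ) : SimpleGraph (ZMod n) := fromRel fun a b => b = a + 1

theorem cliqueCycle_eq_boxProd (m q : ℕ) : cliqueCycle m q = zmodCycle (2 * m) □ ⊤ := by
  ext ⟨a, b⟩ ⟨a', b'⟩
  simp only [cliqueCycle, zmodCycle, boxProd_adj, fromRel_adj, top_adj, ne_eq, Prod.mk.injEq]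
  tauto

variable {n : ℕ}

theorem zmodCycle_adj_add_one (hn : 1 < n) (a : ZMod n) : (zmodCycle n).Adj a (a + 1) := by
  have : Fact (1 < n) := ⟨hn⟩
  simp [zmodCycle]

def pathGraphHomZModCycle (hn : 1 < n) (c : ZMod n) (k : ℕ) : pathGraph k →g zmodCycle n where
  toFun i := c + (i.val : ZMod n)
  map_rel' {i j} h := by
    rcases pathGraph_adj.mp h with h | h
    · rw [← h, Nat.cast_succ, ← add_assoc]
      exact zmodCycle_adj_add_one hn _
    · rw [← h, Nat.cast_succ, ← add_assoc]
      exact (zmodCycle_adj_add_one hn _).symm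

theorem zmodCycle_connected (hn : 1 < n) : (zmodCycle n).Connected := by
  have : NeZero n := ⟨by omega⟩
  refine ⟨(pathGraph_preconnected n).map (pathGraphHomZModCycle hn 0 n) fun a => ?_⟩
  exact ⟨⟨a.val, a.val_lt⟩, by simp [pathGraphHomZModCycle]⟩

theorem zmodCycle_induce_compl_singleton_preconnected (hn : 1 < n) (v : ZMod n) :
    ((zmodCycle n).induce {v}ᶜ).Preconnected := by
  have : NeZero n := ⟨by omega⟩
  let path := pathGraphHomZModCycle hn (v + 1) (n - 1)
  have hpath : ∀ i, path i ∈ ({v}ᶜ : Set (ZMod n)) := by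
    intro i hi
    have hzero : ((i.val + 1 : ℕ) : ZMod n) = 0 := by
      have hi : v + 1 + (i.val : ZMod n) = v := hi
      push_cast
      linear_combination hi
    have := Nat.le_of_dvd (Nat.succ_pos _) ((ZMod.natCast_eq_zero_iff _ _).mp hzero)
    omega
  let f : pathGraph (n - 1) →g (zmodCycle n).induce {v}ᶜ :=
    { toFun := fun i => ⟨path i, hpath i⟩
      map_rel' := path.map_rel' }
  refine (pathGraph_preconnected _).map f fun ⟨a, ha⟩ => ?_
  have hval : (a - v).val ≠ 0 := by simpa [ZMod.val_eq_zero, sub_eq_zero] using ha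
  refine ⟨⟨(a - v).val - 1, by have := (a - v).val_lt; omega⟩, Subtype.ext ?_⟩
  change v + 1 + (((a - v).val - 1 : ℕ) : ZMod n) = a
  rw [Nat.cast_sub (by omega), ZMod.natCast_zmod_val]
  ring

end SimpleGraph

/-- For `m ≥ 2` and `q ≥ 1` (so `N = 2mq` is divisible by `2m` with
`q = N/(2m)`), the graph consisting of `2m` cliques of size `q` and `q` pairwise
vertex-disjoint cycles, each through exactly one vertex of each clique, remains
connected after removing any `N/(2m) = q` vertices. -/
theorem stmt9 (m q : ℕ) (hm : 2 ≤ m) (hq : 1 ≤ q) :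
    ∀ S : Finset (ZMod (2 * m) × ZMod q), S.card ≤ q →
      ((cliqueCycle m q).induce ((S : Set (ZMod (2 * m) × ZMod q))ᶜ)).Connected := by
  intro S hS
  have : NeZero q := ⟨by omega⟩
  have : NeZero (2 * m) := ⟨by omega⟩
  rw [cliqueCycle_eq_boxProd]
  exact connected_boxProd_top_induce_compl (zmodCycle_connected (by omega))
    (zmodCycle_induce_compl_singleton_preconnected (by omega))
    (ENat.exists_ne_ne_of_three_le
      (by simp [ENat.card_eq_coe_fintype_card, ZMod.card]; norm_cast; omega)) (by rwa [ZMod.card])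
end

section
/- Consider a dynamic process where at each step one new vertex is inserted into a cycle (arbitrarily between two consecutive cycle vertices) and the new vertex is joined by edges to all vertices within cyclic distance s of it in the updated cycle, for a fixed s ≥ 1. If initially (at size N_0 ≥ 2s + 1) every vertex is adjacent to all vertices within cyclic distance s in the cycle, then after every step, every vertex is still adjacent to all vertices within cyclic distance s in the updated cycle; i.e., the circulant graph C_{N_k}(1,...,s) is a subgraph of the network at every time k. -/
open Classical SimpleGraph

/-!
Deleting a vertex from a cycle never increases the cyclic distance between two remaining
vertices: their distance along each of the two arcs either stays the same or drops by one.
Hence a pair of old vertices at distance at most `s` after an insertion was already at distance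
at most `s` before it, and so adjacent by induction, while pairs involving the new vertex are
adjacent by construction.
-/

theorem cycDist_comm (N : ℕ) (i j : ZMod N) : cycDist N i j = cycDist N j i :=
  min_comm _ _

theorem ZMod.val_sub_of_lt {n : ℕ} [NeZero n] {a b : ZMod n} (h : a.val < b.val) :
    (a - b).val = n - (b.val - a.val) := by
  rw [← neg_sub, ZMod.neg_val, if_neg, ZMod.val_sub h.le]
  rw [sub_eq_zero]
  rintro rfl
  exact h.false

theorem ZMod.neZero_of_ne {n : ℕ} {a b : ZMod (n + 1)} (h : a ≠ b) : NeZero n := by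
  refine ⟨?_⟩
  rintro rfl
  exact h (Subsingleton.elim (α := ZMod 1) a b)

theorem cycDist_eq_min_dist {n : ℕ} [NeZero n] (a b : ZMod n) :
    cycDist n a b = min (a.val.dist b.val) (n - a.val.dist b.val) := by
  wlog h : b.val ≤ a.val generalizing a b
  · rw [cycDist_comm, Nat.dist_comm]
    exact this b a (by omega)
  rw [Nat.dist_eq_sub_of_le_right h, cycDist, ZMod.val_sub h]
  rcases h.eq_or_lt with h | h
  · rw [ZMod.val_injective n h]
    simp
  · rw [ZMod.val_sub_of_lt h]

/-- The new position of the old position `a` when a vertex is inserted at position `J`. -/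
def cycInsert {n : ℕ} (J : ZMod (n + 1)) (a : ZMod n) : ZMod (n + 1) :=
  if a.val < J.val then (a.val : ZMod (n + 1)) else ((a.val + 1 : ℕ) : ZMod (n + 1))

section cycInsert

variable {n : ℕ} [NeZero n]

theorem val_cycInsert (J : ZMod (n + 1)) (a : ZMod n) :
    (cycInsert J a).val = if a.val < J.val then a.val else a.val + 1 := by
  have := a.val_lt
  unfold cycInsert
  split_ifs <;> exact ZMod.val_cast_of_lt (by omega)

theorem exists_cycInsert_eq {J i : ZMod (n + 1)} (h : i ≠ J) : ∃ a : ZMod n, cycInsert J a = i := by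
  have hiJ : i.val ≠ J.val := fun h' => h (ZMod.val_injective _ h')
  have := i.val_lt
  have := J.val_lt
  refine ⟨((if i.val < J.val then i.val else i.val - 1 : ℕ) : ZMod n), ZMod.val_injective _ ?_⟩
  rw [val_cycInsert, ZMod.val_cast_of_lt (by split_ifs <;> omega)]
  split_ifs <;> omega

theorem cycDist_le_cycDist_cycInsert (J : ZMod (n + 1)) (a b : ZMod n) :
    cycDist n a b ≤ cycDist (n + 1) (cycInsert J a) (cycInsert J b) := by
  have := a.val_lt
  have := b.val_lt
  rw [cycDist_eq_min_dist, cycDist_eq_min_dist, val_cycInsert, val_cycInsert]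
  simp only [Nat.dist]
  split_ifs <;> omega

end cycInsert

theorem stmt13_general (s N0 : ℕ)
    (c : (k : ℕ) → ZMod (N0 + k) → ℕ)
    (G : ℕ → SimpleGraph ℕ)
    (hmono : ∀ k, G k ≤ G (k + 1))
    (j : (k : ℕ) → ZMod (N0 + k + 1))
    (hold : ∀ k (i : ZMod (N0 + k)),
      c (k + 1) (if i.val < (j k).val then ((i.val : ℕ) : ZMod (N0 + k + 1))
                 else ((i.val + 1 : ℕ) : ZMod (N0 + k + 1))) = c k i)
    (hnewedges : ∀ k (i : ZMod (N0 + k + 1)), i ≠ j k →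
      cycDist (N0 + k + 1) (j k) i ≤ s →
      (G (k + 1)).Adj (c (k + 1) (j k)) (c (k + 1) i))
    (hinit : ∀ i i' : ZMod N0, i ≠ i' → cycDist N0 i i' ≤ s →
      (G 0).Adj (c 0 i) (c 0 i')) :
    ∀ k (i i' : ZMod (N0 + k)), i ≠ i' → cycDist (N0 + k) i i' ≤ s →
      (G k).Adj (c k i) (c k i') := by
  intro k
  induction k with
  | zero => exact hinit
  | succ k ih =>
    intro i i' hne hd
    have : NeZero (N0 + k) := ZMod.neZero_of_ne hne
    by_cases hi : i = j k
    · subst hi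
      exact hnewedges k i' hne.symm hd
    by_cases hi' : i' = j k
    · subst hi'
      exact (hnewedges k i hi (by rwa [cycDist_comm])).symm
    obtain ⟨a, rfl⟩ := exists_cycInsert_eq hi
    obtain ⟨b, rfl⟩ := exists_cycInsert_eq hi'
    have hab : a ≠ b := ne_of_apply_ne _ hne
    have hdab := (cycDist_le_cycDist_cycInsert (j k) a b).trans hd
    have hins : ∀ a, c (k + 1) (cycInsert (j k) a) = c k a := hold k
    rw [hins, hins]
    exact hmono k (ih a b hab hdab)

/-- dynamic insertion into a cycle.  At time `k` the network `G k` has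
vertices `0, …, N0 + k - 1`; the current cyclic ordering is recorded by the bijection
`c k : ZMod (N0 + k) → ℕ` from positions to vertices.  At each step the new vertex
`N0 + k` is inserted at position `j k` (old positions at or after `j k` shift by one),
edges are never removed, and the new vertex is joined to every vertex within cyclic
distance `s` of it in the updated cycle.  If initially every pair of vertices at cyclic
distance at most `s` is adjacent, then this remains true after every step: the circulant
graph `C_{N0+k}(1, …, s)` is always a subgraph of the network. -/
theorem stmt13 (s N0 : ℕ) (hs : 1 ≤ s) (hN0 : 2 * s + 1 ≤ N0)
    (c : (k : ℕ) → ZMod (N0 + k) → ℕ)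
    (hinj : ∀ k, Function.Injective (c k))
    (hrange : ∀ k i, c k i < N0 + k)
    (G : ℕ → SimpleGraph ℕ)
    (hmono : ∀ k, G k ≤ G (k + 1))
    (j : (k : ℕ) → ZMod (N0 + k + 1))
    (hnew : ∀ k, c (k + 1) (j k) = N0 + k)
    (hold : ∀ k (i : ZMod (N0 + k)),
      c (k + 1) (if i.val < (j k).val then ((i.val : ℕ) : ZMod (N0 + k + 1))
                 else ((i.val + 1 : ℕ) : ZMod (N0 + k + 1))) = c k i)
    (hnewedges : ∀ k (i : ZMod (N0 + k + 1)), i ≠ j k →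
      cycDist (N0 + k + 1) (j k) i ≤ s →
      (G (k + 1)).Adj (c (k + 1) (j k)) (c (k + 1) i))
    (hinit : ∀ i i' : ZMod N0, i ≠ i' → cycDist N0 i i' ≤ s →
      (G 0).Adj (c 0 i) (c 0 i')) :
    ∀ k (i i' : ZMod (N0 + k)), i ≠ i' → cycDist (N0 + k) i i' ≤ s →
      (G k).Adj (c k i) (c k i') :=
  stmt13_general s N0 c G hmono j hold hnewedges hinit
end

section
/- Let G be as in the f_k < 1 construction: two cliques A, B of size q each, a perfect matching a_i–b_i, and the first n+1 vertices of each clique joined to every vertex of the other clique (q ≥ n + 2). Then for every set S of at most q + n vertices, G minus S is connected. -/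
open Classical SimpleGraph

/-- The `f_k < 1` construction: two cliques of size `q` (the two summands), the perfect
matching `a_i ~ b_i`, and each of the first `n + 1` vertices of either clique joined to
every vertex of the other clique. -/
def multiHubCliques (q n : ℕ) : SimpleGraph (Fin q ⊕ Fin q) where
  Adj x y := x ≠ y ∧
    match x, y with
    | .inl _, .inl _ => True
    | .inr _, .inr _ => True
    | .inl i, .inr j => i = j ∨ (i : ℕ) ≤ n ∨ (j : ℕ) ≤ n
    | .inr i, .inl j => i = j ∨ (i : ℕ) ≤ n ∨ (j : ℕ) ≤ n
  symm := ⟨by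
    rintro (i | i) (j | j) ⟨hne, h⟩ <;>
      exact ⟨hne.symm, by simp_all <;> tauto⟩⟩
  loopless := ⟨by rintro (i | i) ⟨hne, _⟩ <;> exact hne rfl⟩

/-! The graph minus `S` is covered by the cliques `A \ S` and `B \ S`, so it is connected as soon
as one of them is empty or some cross edge survives. If none survives, every index `i` is deleted
on at least one side (the matching edge `a_i b_i`) and every hub index `i ≤ n` on both sides (a
surviving hub sees the whole other side), so `S` has at least `q + n + 1` vertices. -/

open Finset

namespace SimpleGraph

variable {V : Type*} {H : SimpleGraph V}

theorem IsClique.reachable {s : Set V} (hs : H.IsClique s) {x y : V} (hx : x ∈ s) (hy : y ∈ s) :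
    H.Reachable x y := by
  rcases eq_or_ne x y with rfl | hxy
  · rfl
  · exact (hs hx hy hxy).reachable

theorem preconnected_of_isClique_cover {s t : Set V} (hs : H.IsClique s) (ht : H.IsClique t)
    (hcover : ∀ x, x ∈ s ∨ x ∈ t) (hbridge : ∀ x ∈ s, ∀ y ∈ t, ∃ u ∈ s, ∃ v ∈ t, H.Adj u v) :
    H.Preconnected := by
  have cross : ∀ x ∈ s, ∀ y ∈ t, H.Reachable x y := fun x hx y hy => by
    obtain ⟨u, hu, v, hv, huv⟩ := hbridge x hx y hy
    exact ((hs.reachable hx hu).trans huv.reachable).trans (ht.reachable hv hy)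
  intro x y
  rcases hcover x with hx | hx <;> rcases hcover y with hy | hy
  · exact hs.reachable hx hy
  · exact cross x hx y hy
  · exact (cross y hy x hx).symm
  · exact ht.reachable hx hy

end SimpleGraph

namespace multiHubCliques

variable {q n : ℕ}

@[simp]
theorem adj_inl_inl {i j : Fin q} : (multiHubCliques q n).Adj (.inl i) (.inl j) ↔ i ≠ j := by
  simp [multiHubCliques]

@[simp]
theorem adj_inr_inr {i j : Fin q} : (multiHubCliques q n).Adj (.inr i) (.inr j) ↔ i ≠ j := by
  simp [multiHubCliques]

@[simp]
theorem adj_inl_inr {i j : Fin q} :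
    (multiHubCliques q n).Adj (.inl i) (.inr j) ↔ i = j ∨ (i : ℕ) ≤ n ∨ (j : ℕ) ≤ n := by
  simp [multiHubCliques]

end multiHubCliques

theorem Fin.exists_cross_pair_of_card_le {q n : ℕ} (hn : n < q) {L R : Finset (Fin q)}
    (hLR : #L + #R ≤ q + n) {a b : Fin q} (ha : a ∉ L) (hb : b ∉ R) :
    ∃ u ∉ L, ∃ v ∉ R, u = v ∨ (u : ℕ) ≤ n ∨ (v : ℕ) ≤ n := by
  by_contra! h
  have cover : L ∪ R = univ := eq_univ_of_forall fun i => by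
    by_contra hi
    simp only [mem_union, not_or] at hi
    exact (h i hi.1 i hi.2).1 rfl
  have hubs : Iic (⟨n, hn⟩ : Fin q) ⊆ L ∩ R := fun i hi => by
    have hin : (i : ℕ) ≤ n := Fin.le_def.1 (Finset.mem_Iic.1 hi)
    refine mem_inter.2 ⟨?_, ?_⟩ <;> by_contra hi'
    · exact absurd hin (h i hi' b hb).2.1.not_ge
    · exact absurd hin (h a ha i hi').2.2.not_ge
  have hsum := card_union_add_card_inter L R
  have hhub := card_le_card hubs
  rw [cover, card_univ, Fintype.card_fin] at hsum
  rw [Fin.card_Iic, Fin.val_mk] at hhub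
  omega

/-- In the `f_k < 1` construction on `N = 2q` vertices with `q ≥ n + 2`,
removing any set of at most `q + n = N/2 + n` vertices leaves a connected graph. -/
theorem stmt19 (q n : ℕ) (hq : n + 2 ≤ q) :
    ∀ S : Finset (Fin q ⊕ Fin q), S.card ≤ q + n →
      ((multiHubCliques q n).induce ((S : Set (Fin q ⊕ Fin q))ᶜ)).Connected := by
  intro S hS
  set T : Set (Fin q ⊕ Fin q) := (S : Set (Fin q ⊕ Fin q))ᶜ
  set H := (multiHubCliques q n).induce T
  obtain ⟨v₀, hv₀⟩ : ∃ v, v ∉ S := by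
    by_contra! hall
    have hcard := card_le_card (s := univ) fun v _ => hall v
    simp only [card_univ, Fintype.card_sum, Fintype.card_fin] at hcard
    omega
  have : Nonempty T := ⟨⟨v₀, hv₀⟩⟩
  have left : H.IsClique {x | ∃ i, x.1 = .inl i} := by
    rintro ⟨_, _⟩ ⟨i, rfl⟩ ⟨_, _⟩ ⟨j, rfl⟩ hne
    simpa [H] using hne
  have right : H.IsClique {x | ∃ i, x.1 = .inr i} := by
    rintro ⟨_, _⟩ ⟨i, rfl⟩ ⟨_, _⟩ ⟨j, rfl⟩ hne
    simpa [H] using hne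
  refine ⟨preconnected_of_isClique_cover left right (fun ⟨x, _⟩ => ?_) ?_⟩
  · cases x <;> simp
  rintro ⟨_, ha⟩ ⟨a, rfl⟩ ⟨_, hb⟩ ⟨b, rfl⟩
  obtain ⟨u, hu, v, hv, huv⟩ := Fin.exists_cross_pair_of_card_le (n := n) (by omega)
    (L := S.toLeft) (R := S.toRight) (by rwa [card_toLeft_add_card_toRight])
    (mem_toLeft.not.2 ha) (mem_toRight.not.2 hb)
  exact ⟨⟨_, mem_toLeft.not.1 hu⟩, ⟨u, rfl⟩, ⟨_, mem_toRight.not.1 hv⟩, ⟨v, rfl⟩, by simpa [H]⟩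
end
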